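/- arXiv:2409.14375 — 3 statements merged into one kernel-verified Lean document; each statement's English description precedes it below -/
import Mathlib

section
/- Let N ∈ ℕ, let d be a positive divisor of N and let a be an integer with 0 ≤ a < N/d, and let L = ℤ·(d,0) + ℤ·(a, N/d) ⊆ ℤ². Then there exist integers A, B with gcd(A,B,N) = 1 and L = {(x,y) ∈ ℤ² : Ax + By ≡ 0 (mod N)} if and only if gcd(a, d, N/d) = 1. Equivalently, the index-N sublattices of ℤ² that are NOT preimages of solution sets of a linear congruence Ax + By ≡ 0 (mod N) with gcd(A,B,N) = 1 are exactly those of the form ℤ·(d,0) + ℤ·(a, N/d) with d | N, 0 ≤ a < N/d and gcd(a, d, N/d) > 1. -/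
/-!
Write `e = N / d`, so `N = d e`. If the generators `(d, 0)` and `(a, e)` solve
`A x + B y ≡ 0 (mod d e)`, then `e ∣ A` and, writing `A = e A'`, `d ∣ A' a + B`; so every
common divisor of `a, d, e` divides `A`, `B` and `N`. Conversely, if `gcd(a, d, e) = 1` one can
shift `a` by a multiple of `d` to some `c` prime to `e`, and then the lattice is cut out by
`e x - c y ≡ 0`.
-/

-- With `k` the product of the primes of `e` not dividing `a`, each prime factor of `e` divides
-- exactly one of `a` and `k * d`.
theorem Nat.exists_coprime_add_mul_of_coprime_gcd {a d e : ℕ} (he : e ≠ 0)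
    (h : Nat.Coprime (Nat.gcd a d) e) : ∃ k : ℕ, Nat.Coprime (a + k * d) e := by
  classical
  let P := ∏ p ∈ e.primeFactors with ¬p ∣ a, p
  refine ⟨P, Nat.Coprime.symm <| Nat.coprime_of_dvd fun p hp hpe hpc ↦ ?_⟩
  have hpP : p ∣ P ↔ ¬p ∣ a := by
    refine ⟨fun hpP hpa ↦ ?_, fun hpa ↦ Finset.dvd_prod_of_mem _ ?_⟩
    · obtain ⟨q, hq, hpq⟩ := (hp.prime.dvd_finsetProd_iff _).mp hpP
      rw [Finset.mem_filter, Nat.mem_primeFactors] at hq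
      exact hq.2 ((Nat.prime_dvd_prime_iff_eq hp hq.1.1).mp hpq ▸ hpa)
    · exact Finset.mem_filter.mpr ⟨Nat.mem_primeFactors.mpr ⟨hp, hpe, he⟩, hpa⟩
  by_cases hpa : p ∣ a
  · have hpd : p ∣ d := by
      have hpPd : p ∣ P * d := (Nat.dvd_add_right hpa).mp hpc
      exact (hp.dvd_mul.mp hpPd).resolve_left (mt hpP.mp (not_not.mpr hpa))
    exact hp.one_lt.ne' (Nat.dvd_one.mp (h ▸ Nat.dvd_gcd (Nat.dvd_gcd hpa hpd) hpe))
  · exact hpa ((Nat.dvd_add_left (dvd_mul_of_dvd_left (hpP.mpr hpa) d)).mp hpc)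

theorem ZMod.setOf_linear_eq_zero (N : ℕ) (A B : ℤ) :
    {p : ℤ × ℤ | (A : ZMod N) * (p.1 : ZMod N) + (B : ZMod N) * (p.2 : ZMod N) = 0} =
      {p : ℤ × ℤ | (N : ℤ) ∣ A * p.1 + B * p.2} := by
  ext p
  simp only [Set.mem_ofPred_eq, ← ZMod.intCast_zmod_eq_zero_iff_dvd, Int.cast_add, Int.cast_mul]

theorem dvd_coeffs_of_closure_subset_setOf_dvd {d e a A B g : ℤ} (hd : d ≠ 0) (he : e ≠ 0)
    (hL : (AddSubgroup.closure {(d, 0), (a, e)} : Set (ℤ × ℤ)) ⊆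
      {p | d * e ∣ A * p.1 + B * p.2})
    (hga : g ∣ a) (hgd : g ∣ d) (hge : g ∣ e) : g ∣ A ∧ g ∣ B := by
  have h₁ : d * e ∣ A * d + B * 0 := hL (AddSubgroup.subset_closure (.inl rfl))
  have h₂ : d * e ∣ A * a + B * e := hL (AddSubgroup.subset_closure (.inr rfl))
  obtain ⟨A', rfl⟩ : e ∣ A := by
    rwa [mul_zero, add_zero, mul_comm d, mul_dvd_mul_iff_right hd] at h₁
  have hdB : d ∣ A' * a + B := by
    rwa [mul_comm d, show e * A' * a + B * e = e * (A' * a + B) by ring,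
      mul_dvd_mul_iff_left he] at h₂
  refine ⟨hge.mul_right A', ?_⟩
  simpa using dvd_sub (hgd.trans hdB) (hga.mul_left A')

theorem closure_pair_eq_setOf_dvd {d e a c : ℤ} (he : e ≠ 0) (hec : IsCoprime e c)
    (hac : d ∣ a + c) :
    (AddSubgroup.closure {(d, 0), (a, e)} : Set (ℤ × ℤ)) =
      {p | d * e ∣ e * p.1 + c * p.2} := by
  obtain ⟨t, ht⟩ := hac
  ext ⟨x, y⟩
  simp only [SetLike.mem_coe, AddSubgroup.mem_closure_pair, Prod.smul_mk, smul_eq_mul,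
    Prod.mk_add_mk, Prod.mk.injEq, mul_zero, Set.mem_ofPred_eq]
  constructor
  · rintro ⟨m, n, rfl, rfl⟩
    exact ⟨m + n * t, by linear_combination (e * n) * ht⟩
  · rintro ⟨q, hq⟩
    obtain ⟨n, rfl⟩ : e ∣ y :=
      hec.dvd_of_dvd_mul_left ⟨d * q - x, by linear_combination hq⟩
    have hx : x + c * n = d * q := mul_left_cancel₀ he (by linear_combination hq)
    exact ⟨q - t * n, n, by linear_combination -hx + n * ht, by ring⟩

theorem sublattice_is_congruence_solution_set_iff_general (N d : ℕ) (hN : 0 < N)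
    (hd : d ∣ N) (a : ℕ) :
    (∃ A B : ℤ, Int.gcd (Int.gcd A B) N = 1 ∧
        ((AddSubgroup.closure {((d : ℤ), (0 : ℤ)), ((a : ℤ), ((N / d : ℕ) : ℤ))} :
            AddSubgroup (ℤ × ℤ)) : Set (ℤ × ℤ)) =
          {p : ℤ × ℤ | (A : ZMod N) * (p.1 : ZMod N) + (B : ZMod N) * (p.2 : ZMod N) = 0}) ↔
      Nat.gcd (Nat.gcd a d) (N / d) = 1 := by
  set e := N / d
  have hd0 : d ≠ 0 := ne_zero_of_dvd_ne_zero hN.ne' hd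
  have he0 : e ≠ 0 := (Nat.div_pos (Nat.le_of_dvd hN hd) hd0.bot_lt).ne'
  have hNde : (N : ℤ) = d * e := by exact_mod_cast (Nat.mul_div_cancel' hd).symm
  simp only [ZMod.setOf_linear_eq_zero, hNde]
  constructor
  · rintro ⟨A, B, hgcd, hL⟩
    set g := Nat.gcd (Nat.gcd a d) e
    obtain ⟨⟨hga, hgd⟩, hge⟩ : (g ∣ a ∧ g ∣ d) ∧ g ∣ e :=
      ⟨Nat.dvd_gcd_iff.mp (Nat.gcd_dvd_left _ _), Nat.gcd_dvd_right _ _⟩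
    obtain ⟨hgA, hgB⟩ := dvd_coeffs_of_closure_subset_setOf_dvd (Nat.cast_ne_zero.mpr hd0)
      (Nat.cast_ne_zero.mpr he0) hL.subset (Int.natCast_dvd_natCast.mpr hga)
      (Int.natCast_dvd_natCast.mpr hgd) (Int.natCast_dvd_natCast.mpr hge)
    have hgN : (g : ℤ) ∣ d * e := (Int.natCast_dvd_natCast.mpr hgd).mul_right _
    exact Nat.dvd_one.mp (hgcd ▸ Int.natCast_dvd_natCast.mp
      (Int.dvd_coe_gcd (Int.dvd_coe_gcd hgA hgB) hgN))
  · intro h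
    obtain ⟨k, hk⟩ := Nat.exists_coprime_add_mul_of_coprime_gcd he0 h
    have hcop : IsCoprime (e : ℤ) (-((a + k * d : ℕ) : ℤ)) :=
      (Nat.isCoprime_iff_coprime.mpr hk.symm).neg_right
    refine ⟨e, _, ?_, closure_pair_eq_setOf_dvd (Nat.cast_ne_zero.mpr he0) hcop
      ⟨-k, by push_cast; ring⟩⟩
    rw [Int.isCoprime_iff_gcd_eq_one.mp hcop]
    exact Int.one_gcd

/-- For `d ∣ N`, `0 ≤ a < N/d`, the index-`N` sublattice
`L = ℤ·(d,0) + ℤ·(a, N/d)` of `ℤ²` is the preimage of the solution set of a congruence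
`Ax + By ≡ 0 (mod N)` with `gcd(A,B,N) = 1` iff `gcd(a, d, N/d) = 1`. -/
theorem sublattice_is_congruence_solution_set_iff (N d : ℕ) (hN : 0 < N)
    (hd : d ∣ N) (hd0 : 0 < d) (a : ℕ) (ha : a < N / d) :
    (∃ A B : ℤ, Int.gcd (Int.gcd A B) N = 1 ∧
        ((AddSubgroup.closure {((d : ℤ), (0 : ℤ)), ((a : ℤ), ((N / d : ℕ) : ℤ))} :
            AddSubgroup (ℤ × ℤ)) : Set (ℤ × ℤ)) =
          {p : ℤ × ℤ | (A : ZMod N) * (p.1 : ZMod N) + (B : ZMod N) * (p.2 : ZMod N) = 0}) ↔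
      Nat.gcd (Nat.gcd a d) (N / d) = 1 :=
  sublattice_is_congruence_solution_set_iff_general N d hN hd a
end

section
/- Let N ∈ ℕ and let L be a subgroup of ℤ² of index N. Then the quotient group ℤ²/L is cyclic (equivalently, ℤ²/L ≅ ℤ/Nℤ) if and only if there exist integers A, B with gcd(A,B,N) = 1 such that L = {(x,y) ∈ ℤ² : Ax + By ≡ 0 (mod N)}. That is, for n = 2 and j = 1, π_N^{−1}(H_{N,1}(2)) = L_{N,1}(2) for every integer modulus N. -/
/-!
An isomorphism `ℤ²/L ≃+ ℤ/N` is the same thing as a surjective homomorphism `ℤ² → ℤ/N` with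
kernel `L`, and every homomorphism `ℤ² → ℤ/N` is `(x, y) ↦ A x + B y`, with `A`, `B` lifts of the
images of the basis vectors. Its image is generated by `A` and `B` modulo `N`, so it is onto
exactly when `A x + B y + N z = 1` is solvable, i.e. when `gcd(A, B, N) = 1`.
-/

open Function

def linearFormHom {R : Type*} [Ring R] (a b : R) : ℤ × ℤ →+ R :=
  AddMonoidHom.mk' (fun p => a * p.1 + b * p.2) fun p q => by
    simp only [Prod.fst_add, Prod.snd_add, Int.cast_add, mul_add]; abel

@[simp]
theorem linearFormHom_apply {R : Type*} [Ring R] (a b : R) (p : ℤ × ℤ) :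
    linearFormHom a b p = a * p.1 + b * p.2 := rfl

theorem coe_ker_linearFormHom {R : Type*} [Ring R] (a b : R) :
    ((linearFormHom a b).ker : Set (ℤ × ℤ)) = {p | a * p.1 + b * p.2 = 0} := rfl

theorem eq_linearFormHom {R : Type*} [Ring R] (f : ℤ × ℤ →+ R) :
    f = linearFormHom (f (1, 0)) (f (0, 1)) := by
  ext ⟨x, y⟩
  have hxy : ((x, y) : ℤ × ℤ) = x • ((1 : ℤ), (0 : ℤ)) + y • ((0 : ℤ), (1 : ℤ)) := by
    simp
  rw [hxy, map_add, map_zsmul, map_zsmul, zsmul_eq_mul', zsmul_eq_mul']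
  simp

theorem Int.gcd_gcd_eq_one_iff_exists (a b c : ℤ) :
    Int.gcd (Int.gcd a b) c = 1 ↔ ∃ x y z : ℤ, a * x + b * y + c * z = 1 := by
  rw [← Int.isCoprime_iff_gcd_eq_one]
  constructor
  · rintro ⟨u, v, huv⟩
    refine ⟨u * Int.gcdA a b, u * Int.gcdB a b, v, ?_⟩
    rw [← huv, Int.gcd_eq_gcd_ab a b]
    ring
  · rintro ⟨x, y, z, h⟩
    have hcop : IsCoprime (a * x + b * y) c := ⟨1, z, by linear_combination h⟩
    exact hcop.of_isCoprime_of_dvd_left <|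
      dvd_add ((Int.gcd_dvd_left a b).mul_right x) ((Int.gcd_dvd_right a b).mul_right y)

theorem ZMod.addMonoidHom_surjective_iff {G : Type*} [AddGroup G] {N : ℕ} (f : G →+ ZMod N) :
    Surjective f ↔ ∃ g, f g = 1 := by
  refine ⟨fun hf => hf 1, fun ⟨g, hg⟩ z => ?_⟩
  obtain ⟨m, rfl⟩ := ZMod.intCast_surjective z
  exact ⟨m • g, by rw [map_zsmul, hg, zsmul_one]⟩

theorem linearFormHom_intCast_surjective_iff (N : ℕ) (A B : ℤ) :
    Surjective (linearFormHom (A : ZMod N) (B : ZMod N)) ↔ Int.gcd (Int.gcd A B) N = 1 := by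
  rw [ZMod.addMonoidHom_surjective_iff, Int.gcd_gcd_eq_one_iff_exists]
  simp only [Prod.exists, linearFormHom_apply]
  refine exists₂_congr fun x y => ?_
  have hcast : (A : ZMod N) * x + B * y = ((A * x + B * y : ℤ) : ZMod N) := by push_cast; rfl
  rw [hcast, ← Int.cast_one, ZMod.intCast_eq_intCast_iff_dvd_sub]
  exact ⟨fun ⟨z, hz⟩ => ⟨z, by linarith⟩, fun ⟨z, hz⟩ => ⟨z, by linarith⟩⟩

theorem AddSubgroup.nonempty_quotient_addEquiv_iff {G H : Type*} [AddCommGroup G] [AddGroup H]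
    (L : AddSubgroup G) :
    Nonempty (G ⧸ L ≃+ H) ↔ ∃ f : G →+ H, Surjective f ∧ f.ker = L := by
  constructor
  · rintro ⟨e⟩
    refine ⟨e.toAddMonoidHom.comp (QuotientAddGroup.mk' L),
      e.surjective.comp (QuotientAddGroup.mk'_surjective L), ?_⟩
    ext g
    simp
  · rintro ⟨f, hf, rfl⟩
    exact ⟨QuotientAddGroup.quotientKerEquivOfSurjective f hf⟩

theorem quotient_cyclic_iff_congruence_solution_set_general (N : ℕ)
    (L : AddSubgroup (ℤ × ℤ)) :
    Nonempty ((ℤ × ℤ) ⧸ L ≃+ ZMod N) ↔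
      ∃ A B : ℤ, Int.gcd (Int.gcd A B) N = 1 ∧
        (L : Set (ℤ × ℤ)) =
          {p : ℤ × ℤ | (A : ZMod N) * (p.1 : ZMod N) + (B : ZMod N) * (p.2 : ZMod N) = 0} := by
  rw [AddSubgroup.nonempty_quotient_addEquiv_iff]
  constructor
  · rintro ⟨f, hsurj, rfl⟩
    obtain ⟨A, hA⟩ := ZMod.intCast_surjective (f (1, 0))
    obtain ⟨B, hB⟩ := ZMod.intCast_surjective (f (0, 1))
    rw [eq_linearFormHom f, ← hA, ← hB] at hsurj ⊢
    exact ⟨A, B, (linearFormHom_intCast_surjective_iff N A B).1 hsurj, coe_ker_linearFormHom _ _⟩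
  · rintro ⟨A, B, hgcd, hL⟩
    exact ⟨_, (linearFormHom_intCast_surjective_iff N A B).2 hgcd, SetLike.coe_injective hL.symm⟩

/-- For a subgroup `L ≤ ℤ²` of index `N`, the quotient `ℤ²/L` is cyclic
(equivalently `ℤ²/L ≅ ℤ/Nℤ`) iff `L` is the preimage of the solution set of a congruence
`Ax + By ≡ 0 (mod N)` with `gcd(A,B,N) = 1`; i.e. `π_N^{−1}(H_{N,1}(2)) = L_{N,1}(2)`. -/
theorem quotient_cyclic_iff_congruence_solution_set (N : ℕ) (hN : 0 < N)
    (L : AddSubgroup (ℤ × ℤ)) (hL : L.index = N) :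
    Nonempty ((ℤ × ℤ) ⧸ L ≃+ ZMod N) ↔
      ∃ A B : ℤ, Int.gcd (Int.gcd A B) N = 1 ∧
        (L : Set (ℤ × ℤ)) =
          {p : ℤ × ℤ | (A : ZMod N) * (p.1 : ZMod N) + (B : ZMod N) * (p.2 : ZMod N) = 0} :=
  quotient_cyclic_iff_congruence_solution_set_general N L
end

section
/- Let N ∈ ℕ, let d be a positive divisor of N and let a be an integer with 0 ≤ a < N/d. Then the quotient group ℤ²/(ℤ·(d,0) + ℤ·(a, N/d)) is isomorphic to ℤ/Nℤ if and only if gcd(a, d, N/d) = 1. -/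
/-!
Write `m = N / d`. Reduction modulo `g = gcd(a, d, m)` maps the quotient onto `(ℤ/g)²`, which is
cyclic only for `g = 1`. Conversely, if `g = 1` there is `c ≡ a (mod d)` coprime to `m`, and then
`(x, y) ↦ m x - c y` maps `ℤ²` onto `ℤ/N` with kernel exactly the lattice.
-/

theorem Nat.exists_coprime_add_mul {a d m : ℕ} (hm : m ≠ 0) (h : (a.gcd d).gcd m = 1) :
    ∃ k, (a + k * d).Coprime m := by
  -- A prime of `m` dividing `a` divides neither `k` nor `d`; one not dividing `a` divides `k`.
  set k := ∏ p ∈ m.primeFactors with ¬ p ∣ a, p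
  have hk : ∀ p, p.Prime → p ∣ m → (p ∣ k ↔ ¬ p ∣ a) := by
    intro p hp hpm
    rw [Prime.dvd_finsetProd_iff hp.prime]
    constructor
    · rintro ⟨q, hq, hpq⟩
      rw [Finset.mem_filter, Nat.mem_primeFactors] at hq
      obtain rfl := (Nat.prime_dvd_prime_iff_eq hp hq.1.1).mp hpq
      exact hq.2
    · exact fun hpa => ⟨p, by simp [hp, hpm, hm, hpa], dvd_rfl⟩
  refine ⟨k, Nat.coprime_of_dvd fun p hp hpc hpm => ?_⟩
  by_cases hpa : p ∣ a
  · have hpd : p ∣ d := ((hp.dvd_mul.mp ((Nat.dvd_add_right hpa).mp hpc)).resolve_left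
      (by simpa [hk p hp hpm] using hpa))
    exact hp.not_dvd_one (h ▸ Nat.dvd_gcd (Nat.dvd_gcd hpa hpd) hpm)
  · exact hpa ((Nat.dvd_add_left (dvd_mul_of_dvd_left ((hk p hp hpm).mpr hpa) d)).mp hpc)

theorem eq_one_of_isAddCyclic_zmod_prod {g : ℕ} (h : IsAddCyclic (ZMod g × ZMod g)) : g = 1 := by
  simpa [Nat.card_zmod] using (AddGroup.isAddCyclic_prod_iff.mp h).2.2

def triangularLattice (d a m : ℕ) : AddSubgroup (ℤ × ℤ) :=
  AddSubgroup.closure {((d : ℤ), (0 : ℤ)), ((a : ℤ), (m : ℤ))}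

theorem gcd_eq_one_of_isAddCyclic_quotient_triangularLattice {a d m : ℕ}
    (h : IsAddCyclic ((ℤ × ℤ) ⧸ triangularLattice d a m)) :
    (a.gcd d).gcd m = 1 := by
  set g := (a.gcd d).gcd m
  let r : ℤ × ℤ →+ ZMod g × ZMod g := (Int.castAddHom _).prodMap (Int.castAddHom _)
  have hr : Function.Surjective r :=
    Prod.map_surjective.mpr ⟨ZMod.intCast_surjective, ZMod.intCast_surjective⟩
  have hK : triangularLattice d a m ≤ r.ker := by
    have hga : g ∣ a := (Nat.gcd_dvd_left _ _).trans (Nat.gcd_dvd_left _ _)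
    have hgd : g ∣ d := (Nat.gcd_dvd_left _ _).trans (Nat.gcd_dvd_right _ _)
    have hgm : g ∣ m := Nat.gcd_dvd_right _ _
    rw [triangularLattice, AddSubgroup.closure_le, Set.insert_subset_iff, Set.singleton_subset_iff]
    simp [r, ZMod.natCast_eq_zero_iff, hga, hgd, hgm]
  exact eq_one_of_isAddCyclic_zmod_prod
    (isAddCyclic_of_surjective _ (QuotientAddGroup.lift_surjective_of_surjective _ r hr hK))

theorem mem_triangularLattice_iff_dvd {a d m : ℕ} {c : ℤ} (hm : m ≠ 0) (hac : (d : ℤ) ∣ c - a)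
    (hcm : IsCoprime c m) {x y : ℤ} :
    (x, y) ∈ triangularLattice d a m ↔
      (d * m : ℤ) ∣ m * x - c * y := by
  obtain ⟨r, hr⟩ := hac
  simp only [triangularLattice, AddSubgroup.mem_closure_pair, Prod.ext_iff, Prod.fst_add, Prod.snd_add,
    Prod.smul_mk, smul_eq_mul, mul_zero, zero_add]
  constructor
  · rintro ⟨s, t, rfl, rfl⟩
    exact ⟨s - t * r, by linear_combination (-t * m) * hr⟩
  · rintro ⟨e, he⟩
    obtain ⟨t, rfl⟩ : (m : ℤ) ∣ y :=
      hcm.symm.dvd_of_dvd_mul_left ⟨x - d * e, by linear_combination -he⟩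
    have hx : x - c * t = d * e := by
      apply mul_left_cancel₀ (Int.natCast_ne_zero.mpr hm)
      linear_combination he
    exact ⟨e + r * t, t, by linear_combination -hx - t * hr, by ring⟩

theorem nonempty_quotient_triangularLattice_addEquiv_zmod {a d m : ℕ} (hm : m ≠ 0)
    (h : (a.gcd d).gcd m = 1) :
    Nonempty ((ℤ × ℤ) ⧸ triangularLattice d a m ≃+
      ZMod (d * m)) := by
  obtain ⟨k, hk⟩ := Nat.exists_coprime_add_mul hm h
  set c : ℤ := a + k * d
  have hcm : IsCoprime c m := Nat.isCoprime_iff_coprime.mpr (by exact_mod_cast hk)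
  let φ : ℤ × ℤ →+ ZMod (d * m) :=
    (Int.castAddHom _).comp ((AddMonoidHom.mulLeft (m : ℤ)).coprod (AddMonoidHom.mulLeft (-c)))
  have hφ : ∀ p : ℤ × ℤ, φ p = ((m * p.1 - c * p.2 : ℤ) : ZMod (d * m)) := fun p => by
    simp [φ, sub_eq_add_neg]
  have hker : triangularLattice d a m = φ.ker := by
    ext ⟨x, y⟩
    rw [mem_triangularLattice_iff_dvd hm ⟨k, by ring⟩ hcm, AddMonoidHom.mem_ker, hφ,
      ZMod.intCast_zmod_eq_zero_iff_dvd]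
    push_cast; rfl
  have hsurj : Function.Surjective φ := by
    obtain ⟨u, v, huv⟩ := hcm
    intro z
    obtain ⟨n, rfl⟩ := ZMod.intCast_surjective z
    refine ⟨n • (v, -u), ?_⟩
    rw [hφ]
    congr 1
    simp only [Prod.smul_mk, smul_eq_mul]
    linear_combination n * huv
  exact ⟨(QuotientAddGroup.quotientAddEquivOfEq hker).trans
    (QuotientAddGroup.quotientKerEquivOfSurjective φ hsurj)⟩

theorem quotient_by_sublattice_cyclic_iff_general (N d : ℕ) (hN : 0 < N)
    (hd : d ∣ N) (a : ℕ) :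
    Nonempty ((ℤ × ℤ) ⧸
        (AddSubgroup.closure {((d : ℤ), (0 : ℤ)), ((a : ℤ), ((N / d : ℕ) : ℤ))}) ≃+
        ZMod N) ↔
      Nat.gcd (Nat.gcd a d) (N / d) = 1 := by
  obtain ⟨m, rfl⟩ := hd
  have hd0 : 0 < d := Nat.pos_of_ne_zero (left_ne_zero_of_mul hN.ne')
  rw [Nat.mul_div_cancel_left m hd0]
  refine ⟨fun ⟨e⟩ => gcd_eq_one_of_isAddCyclic_quotient_triangularLattice ?_,
    nonempty_quotient_triangularLattice_addEquiv_zmod (right_ne_zero_of_mul hN.ne')⟩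
  exact e.isAddCyclic.mpr inferInstance

/-- For `d ∣ N` and `0 ≤ a < N/d`, the quotient
`ℤ²/(ℤ·(d,0) + ℤ·(a, N/d))` is isomorphic to `ℤ/Nℤ` iff `gcd(a, d, N/d) = 1`. -/
theorem quotient_by_sublattice_cyclic_iff (N d : ℕ) (hN : 0 < N)
    (hd : d ∣ N) (hd0 : 0 < d) (a : ℕ) (ha : a < N / d) :
    Nonempty ((ℤ × ℤ) ⧸
        (AddSubgroup.closure {((d : ℤ), (0 : ℤ)), ((a : ℤ), ((N / d : ℕ) : ℤ))}) ≃+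
        ZMod N) ↔
      Nat.gcd (Nat.gcd a d) (N / d) = 1 :=
  quotient_by_sublattice_cyclic_iff_general N d hN hd a
end
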